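/- arXiv:2311.07111 — 2 statements merged into one kernel-verified Lean document; each statement's English description precedes it below -/
import Mathlib

section
/- For a stabilizer code Q with stabilizer group S, the generalized stabilizer group S_g of Q equals S, where S_g = (-S_{-1}) ∪ S_{+1} with S_j = {β ∈ E^n (up to sign) : PβP = jP} and P the projector onto Q. -/
open Matrix
open scoped Classical

noncomputable def pauli : Fin 4 → Matrix (Fin 2) (Fin 2) ℂ :=
  ![1, !![0, 1; 1, 0], !![0, -Complex.I; Complex.I, 0], !![1, 0; 0, -1]]

noncomputable def pauliOp {n : ℕ} (f : Fin n → Fin 4) :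
    Matrix (Fin n → Fin 2) (Fin n → Fin 2) ℂ :=
  fun x y => ∏ i, pauli (f i) (x i) (y i)

def pwt {n : ℕ} (f : Fin n → Fin 4) : ℕ :=
  (Finset.univ.filter fun i => f i ≠ 0).card

def PauliGroup (n : ℕ) : Set (Matrix (Fin n → Fin 2) (Fin n → Fin 2) ℂ) :=
  {A | ∃ (k : Fin 4) (f : Fin n → Fin 4), A = Complex.I ^ (k : ℕ) • pauliOp f}

lemma pauli_zero : pauli 0 = 1 := by simp [pauli]

lemma pauli_mul_self (a : Fin 4) : pauli a * pauli a = 1 := by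
  fin_cases a <;>
    simp [pauli, Matrix.mul_fin_two, Complex.I_mul_I] <;>
    · ext i j; fin_cases i <;> fin_cases j <;> simp [Matrix.one_apply]

lemma pauli_conj (a : Fin 4) (i j : Fin 2) :
    star (pauli a i j) = pauli a j i := by
  fin_cases a <;> fin_cases i <;> fin_cases j <;>
    simp [pauli, Matrix.one_apply]

lemma pauli_trace_mul (a b : Fin 4) (h : a ≠ b) :
    (pauli a * pauli b) 0 0 + (pauli a * pauli b) 1 1 = 0 := by
  fin_cases a <;> fin_cases b <;> simp_all [pauli, Matrix.mul_fin_two, Matrix.one_apply]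

lemma one_entry_prod {n : ℕ} (x y : Fin n → Fin 2) :
    (∏ i, (1 : Matrix (Fin 2) (Fin 2) ℂ) (x i) (y i))
      = (1 : Matrix (Fin n → Fin 2) (Fin n → Fin 2) ℂ) x y := by
  by_cases h : x = y
  · subst h; simp [Matrix.one_apply]
  · obtain ⟨i, hi⟩ := Function.ne_iff.mp h
    rw [Finset.prod_eq_zero (Finset.mem_univ i) (by simp [Matrix.one_apply, hi])]
    simp [Matrix.one_apply, h]

lemma pauliOp_mul_apply {n : ℕ} (f g : Fin n → Fin 4) (x y : Fin n → Fin 2) :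
    (pauliOp f * pauliOp g) x y = ∏ i, (pauli (f i) * pauli (g i)) (x i) (y i) := by
  have : ∀ i : Fin n, (pauli (f i) * pauli (g i)) (x i) (y i)
      = ∑ c : Fin 2, pauli (f i) (x i) c * pauli (g i) c (y i) := fun i => by
    simp [Matrix.mul_apply]
  simp only [this]
  rw [Fintype.prod_sum]
  simp only [Matrix.mul_apply, pauliOp]
  exact Finset.sum_congr rfl fun z _ => (Finset.prod_mul_distrib).symm

lemma pauliOp_mul_self {n : ℕ} (f : Fin n → Fin 4) : pauliOp f * pauliOp f = 1 := by
  ext x y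
  rw [pauliOp_mul_apply]
  simp only [pauli_mul_self]
  exact one_entry_prod x y

lemma pauliOp_zero {n : ℕ} : pauliOp (fun _ : Fin n => 0) = 1 := by
  ext x y
  simp only [pauliOp, pauli_zero]
  exact one_entry_prod x y

lemma pauliOp_conj {n : ℕ} (f : Fin n → Fin 4) : (pauliOp f)ᴴ = pauliOp f := by
  ext x y
  simp only [Matrix.conjTranspose_apply, pauliOp, star_prod]
  exact Finset.prod_congr rfl fun i _ => pauli_conj _ _ _

lemma trace_pauliOp_mul {n : ℕ} (f g : Fin n → Fin 4) :
    Matrix.trace (pauliOp f * pauliOp g)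
      = ∏ i, ((pauli (f i) * pauli (g i)) 0 0 + (pauli (f i) * pauli (g i)) 1 1) := by
  simp only [Matrix.trace, Matrix.diag]
  simp only [pauliOp_mul_apply]
  have h1 := Fintype.prod_sum (fun (i : Fin n) (c : Fin 2) => (pauli (f i) * pauli (g i)) c c)
  rw [← h1]
  exact Finset.prod_congr rfl fun i _ => Fin.sum_univ_two _

lemma trace_pauliOp_mul_ne {n : ℕ} {f g : Fin n → Fin 4} (h : f ≠ g) :
    Matrix.trace (pauliOp f * pauliOp g) = 0 := by
  obtain ⟨i, hi⟩ := Function.ne_iff.mp h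
  rw [trace_pauliOp_mul]
  exact Finset.prod_eq_zero (Finset.mem_univ i) (pauli_trace_mul _ _ hi)

lemma trace_pauliOp_ne {n : ℕ} {f : Fin n → Fin 4} (h : f ≠ fun _ => 0) :
    Matrix.trace (pauliOp f) = 0 := by
  have := trace_pauliOp_mul_ne (g := fun _ : Fin n => 0) h
  rwa [pauliOp_zero, mul_one] at this

lemma mulVec_ext {m : Type*} [Fintype m] [DecidableEq m]
    {A B : Matrix m m ℂ} (h : ∀ v, A.mulVec v = B.mulVec v) : A = B := by
  ext i j
  have := congrFun (h (Pi.single j 1)) i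
  simpa [Matrix.mulVec_single] using this

lemma sum_mulVec' {m : Type*} [Fintype m] {ι : Type*} (T : Finset ι)
    (F : ι → Matrix m m ℂ) (u : m → ℂ) :
    (∑ A ∈ T, F A).mulVec u = ∑ A ∈ T, (F A).mulVec u := by
  classical
  induction T using Finset.cons_induction with
  | empty => simp
  | cons a s ha ih => rw [Finset.sum_cons, Finset.sum_cons, Matrix.add_mulVec, ih]

/-- for a stabilizer code Q with stabilizer group S and projector P,
the generalized stabilizer group S_g = (-S_{-1}) ∪ S_{+1}
(where S_j = {β ∈ ±E^n : P β P = j P}) equals S. -/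
theorem gs_group_eq_stabilizer {n : ℕ}
    (S : Set (Matrix (Fin n → Fin 2) (Fin n → Fin 2) ℂ))
    (hSsub : ∀ A ∈ S, ∃ f : Fin n → Fin 4, A = pauliOp f ∨ A = -pauliOp f)
    (hone : (1 : Matrix (Fin n → Fin 2) (Fin n → Fin 2) ℂ) ∈ S)
    (hmul : ∀ A ∈ S, ∀ B ∈ S, A * B ∈ S)
    (habel : ∀ A ∈ S, ∀ B ∈ S, A * B = B * A)
    (hneg : (-1 : Matrix (Fin n → Fin 2) (Fin n → Fin 2) ℂ) ∉ S)
    (P : Matrix (Fin n → Fin 2) (Fin n → Fin 2) ℂ)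
    (hproj : P * P = P) (hherm : Pᴴ = P)
    (hrange : ∀ v : (Fin n → Fin 2) → ℂ, P.mulVec v = v ↔ ∀ A ∈ S, A.mulVec v = v) :
    {γ : Matrix (Fin n → Fin 2) (Fin n → Fin 2) ℂ |
      (∃ f : Fin n → Fin 4, γ = pauliOp f ∨ γ = -pauliOp f) ∧ P * γ * P = P} = S := by
  classical
  have hfin : S.Finite := by
    apply Set.Finite.subset
      (((Set.finite_range (fun f : Fin n → Fin 4 => pauliOp f)).union
        (Set.finite_range (fun f : Fin n → Fin 4 => -pauliOp f))))
    intro A hA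
    obtain ⟨f, hf | hf⟩ := hSsub A hA
    · exact Or.inl ⟨f, hf.symm⟩
    · exact Or.inr ⟨f, hf.symm⟩
  set T := hfin.toFinset with hT
  have hmemT : ∀ A, A ∈ T ↔ A ∈ S := fun A => hfin.mem_toFinset
  set M := ∑ A ∈ T, A with hM
  have hsq : ∀ A ∈ S, A * A = 1 := by
    intro A hA
    obtain ⟨f, hf | hf⟩ := hSsub A hA <;> subst hf
    · exact pauliOp_mul_self f
    · rw [neg_mul_neg]; exact pauliOp_mul_self f
  have hAherm : ∀ A ∈ S, Aᴴ = A := by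
    intro A hA
    obtain ⟨f, hf | hf⟩ := hSsub A hA <;> subst hf
    · exact pauliOp_conj f
    · rw [Matrix.conjTranspose_neg, pauliOp_conj]
  have hBM : ∀ B ∈ S, B * M = M := by
    intro B hB
    rw [hM, Finset.mul_sum]
    refine Finset.sum_nbij' (i := fun A => B * A) (j := fun A => B * A) ?_ ?_ ?_ ?_ ?_
    · intro A hA
      exact (hmemT _).mpr (hmul B hB A ((hmemT A).mp hA))
    · intro A hA
      exact (hmemT _).mpr (hmul B hB A ((hmemT A).mp hA))
    · intro A _; show B * (B * A) = A; rw [← mul_assoc, hsq B hB, one_mul]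
    · intro A _; show B * (B * A) = A; rw [← mul_assoc, hsq B hB, one_mul]
    · intro A _; rfl
  have hMherm : Mᴴ = M := by
    rw [hM, Matrix.conjTranspose_sum]
    exact Finset.sum_congr rfl fun A hA => hAherm A ((hmemT A).mp hA)
  have hPM : P * M = M := by
    apply mulVec_ext
    intro v
    rw [← Matrix.mulVec_mulVec]
    exact (hrange (M.mulVec v)).mpr fun A hA => by
      rw [Matrix.mulVec_mulVec, hBM A hA]
  have hfixP : ∀ v, ∀ A ∈ S, A.mulVec (P.mulVec v) = P.mulVec v := fun v =>
    (hrange _).mp (by rw [Matrix.mulVec_mulVec, hproj])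
  have hMP : M * P = (T.card : ℂ) • P := by
    apply mulVec_ext
    intro v
    rw [← Matrix.mulVec_mulVec, hM, sum_mulVec']
    have : ∀ A ∈ T, A.mulVec (P.mulVec v) = P.mulVec v := fun A hA =>
      hfixP v A ((hmemT A).mp hA)
    rw [Finset.sum_congr rfl this, Finset.sum_const, Matrix.smul_mulVec,
      ← Nat.cast_smul_eq_nsmul ℂ]
  have hMeq : M = (T.card : ℂ) • P := by
    calc M = Mᴴ := hMherm.symm
    _ = (P * M)ᴴ := by rw [hPM]
    _ = Mᴴ * Pᴴ := Matrix.conjTranspose_mul _ _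
    _ = M * P := by rw [hMherm, hherm]
    _ = (T.card : ℂ) • P := hMP
  have honeT : (1 : Matrix (Fin n → Fin 2) (Fin n → Fin 2) ℂ) ∈ T := (hmemT _).mpr hone
  have hcard0 : (T.card : ℂ) ≠ 0 := by
    have : 0 < T.card := Finset.card_pos.mpr ⟨1, honeT⟩
    exact_mod_cast Nat.cast_ne_zero.mpr this.ne'
  have htrA : ∀ A ∈ T, A ≠ 1 → Matrix.trace A = 0 := by
    intro A hA hA1
    obtain ⟨f, hf | hf⟩ := hSsub A ((hmemT A).mp hA)
    · by_cases hf0 : f = fun _ => 0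
      · exact absurd (by rw [hf, hf0, pauliOp_zero]) hA1
      · rw [hf]; exact trace_pauliOp_ne hf0
    · by_cases hf0 : f = fun _ => 0
      · refine absurd ((hmemT A).mp hA) ?_
        rw [hf, hf0, pauliOp_zero]; exact hneg
      · rw [hf, Matrix.trace_neg, trace_pauliOp_ne hf0, neg_zero]
  have htrM : Matrix.trace M = (2 : ℂ) ^ n := by
    rw [hM, Matrix.trace_sum, Finset.sum_eq_single 1 htrA (fun h => absurd honeT h)]
    rw [Matrix.trace_one, Fintype.card_fun]
    simp
  have htwon : ((2 : ℂ) ^ n) ≠ 0 := pow_ne_zero n two_ne_zero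
  have htrP : (T.card : ℂ) * Matrix.trace P = (2 : ℂ) ^ n := by
    rw [← htrM, hMeq, Matrix.trace_smul, smul_eq_mul]
  have hPne : P ≠ 0 := by
    intro h
    rw [h, Matrix.trace_zero, mul_zero] at htrP
    exact htwon htrP.symm
  have hAP : ∀ A ∈ S, A * P = P := by
    intro A hA
    have h := hBM A hA
    rw [hMeq, mul_smul_comm] at h
    exact smul_right_injective _ hcard0 h
  ext γ
  simp only [Set.mem_setOf_eq]
  constructor
  · rintro ⟨⟨f, hf⟩, hPγP⟩
    have h1 : Matrix.trace (γ * M) = (2 : ℂ) ^ n := by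
      have hγP : Matrix.trace (γ * P) = Matrix.trace P := by
        conv_lhs => rw [← hproj, ← mul_assoc]
        rw [Matrix.trace_mul_comm, ← mul_assoc, hPγP]
      rw [hMeq, mul_smul_comm, Matrix.trace_smul, smul_eq_mul, hγP, htrP]
    have h2 : ∃ A ∈ T, Matrix.trace (γ * A) ≠ 0 := by
      by_contra h
      push_neg at h
      rw [hM, Finset.mul_sum, Matrix.trace_sum, Finset.sum_eq_zero h] at h1
      exact htwon h1.symm
    obtain ⟨A, hAT, htr⟩ := h2
    have hAS := (hmemT A).mp hAT
    obtain ⟨g, hg⟩ := hSsub A hAS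
    have hfg : f = g := by
      by_contra hne
      apply htr
      rcases hf with hf | hf <;> rcases hg with hg | hg <;> rw [hf, hg] <;>
        simp [neg_mul, mul_neg, Matrix.trace_neg, trace_pauliOp_mul_ne hne]
    subst hfg
    have negcase : γ = -A → False := by
      intro hγA
      rw [hγA, mul_neg, neg_mul, mul_assoc, hAP A hAS, hproj] at hPγP
      apply hPne
      have h2P : (2 : ℂ) • P = 0 := by rw [two_smul]; nth_rewrite 1 [← hPγP]; abel
      exact (smul_eq_zero.mp h2P).resolve_left (by norm_num)
    rcases hf with hf | hf <;> rcases hg with hg | hg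
    · rw [hf, ← hg]; exact hAS
    · exact absurd (by rw [hf, hg, neg_neg] : γ = -A) negcase
    · exact absurd (by rw [hf, hg] : γ = -A) negcase
    · rw [hf, ← hg]; exact hAS
  · intro hA
    exact ⟨hSsub γ hA, by rw [mul_assoc, hAP γ hA, hproj]⟩
end

section
/- For an EA-CWS code, the set WS_I \ S_I consists of errors undetectable by the code: if α = ω_i β with ω_i a nontrivial word operator and β in the isotropic subgroup S_I, then α violates the quantum error detection conditions; hence d ≤ min{wt(α) : α ∈ WS_I \ S_I}. -/
open Matrix
open scoped Classical

/-- The operator `A ⊗ I^{⊗c}` on `n + c` qubits. -/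
noncomputable def extendOp (n c : ℕ)
    (A : Matrix (Fin n → Fin 2) (Fin n → Fin 2) ℂ) :
    Matrix (Fin (n + c) → Fin 2) (Fin (n + c) → Fin 2) ℂ :=
  fun x y =>
    (if (fun i : Fin c => x (Fin.natAdd n i)) = (fun i : Fin c => y (Fin.natAdd n i))
      then (1 : ℂ) else 0) *
      A (fun i : Fin n => x (Fin.castAdd c i)) (fun i : Fin n => y (Fin.castAdd c i))

/-- Knill-Laflamme detectability of an operator `E` by a code subspace `Q`. -/
def DetectableOn {m : ℕ} (Q : Submodule ℂ ((Fin m → Fin 2) → ℂ))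
    (E : Matrix (Fin m → Fin 2) (Fin m → Fin 2) ℂ) : Prop :=
  (∀ v w : (Fin m → Fin 2) → ℂ, v ∈ Q → w ∈ Q →
      star v ⬝ᵥ v = 1 → star w ⬝ᵥ w = 1 →
      star v ⬝ᵥ E.mulVec v = star w ⬝ᵥ E.mulVec w) ∧
  (∀ v w : (Fin m → Fin 2) → ℂ, v ∈ Q → w ∈ Q →
      star v ⬝ᵥ w = 0 → star v ⬝ᵥ E.mulVec w = 0)


def appEquiv (n c : ℕ) : ((Fin n → Fin 2) × (Fin c → Fin 2)) ≃ (Fin (n+c) → Fin 2) where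
  toFun p := Fin.append p.1 p.2
  invFun z := (fun i => z (Fin.castAdd c i), fun i => z (Fin.natAdd n i))
  left_inv p := Prod.ext (funext fun i => Fin.append_left _ _ i)
    (funext fun i => Fin.append_right _ _ i)
  right_inv z := by
    funext i
    exact Fin.addCases (fun j => Fin.append_left _ _ j) (fun j => Fin.append_right _ _ j) i

lemma extendOp_mul (n c : ℕ) (A B : Matrix (Fin n → Fin 2) (Fin n → Fin 2) ℂ) :
    extendOp n c (A * B) = extendOp n c A * extendOp n c B := by
  funext x y
  have key := Fintype.sum_equiv (appEquiv n c)
    (fun p => extendOp n c A x (appEquiv n c p) * extendOp n c B (appEquiv n c p) y)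
    (fun z => extendOp n c A x z * extendOp n c B z y) (fun p => rfl)
  rw [Matrix.mul_apply, ← key, Fintype.sum_prod_type]
  simp only [extendOp, Matrix.mul_apply, appEquiv, Equiv.coe_fn_mk,
    Fin.append_left, Fin.append_right]
  simp only [ite_mul, mul_ite, zero_mul, mul_zero, one_mul, Finset.sum_ite_eq,
    Finset.mem_univ, if_true]
  by_cases htt : (fun i : Fin c => x (Fin.natAdd n i)) = (fun i : Fin c => y (Fin.natAdd n i)) <;>
    simp [htt, Finset.mul_sum]

lemma extendOp_one (n c : ℕ) : extendOp n c (1 : Matrix _ _ ℂ) = 1 := by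
  funext x y
  simp only [extendOp, Matrix.one_apply]
  by_cases h : x = y
  · subst h; simp
  · have hne : ¬((fun i : Fin c => x (Fin.natAdd n i)) = (fun i : Fin c => y (Fin.natAdd n i)) ∧
        (fun i : Fin n => x (Fin.castAdd c i)) = (fun i : Fin n => y (Fin.castAdd c i))) := by
      rintro ⟨h1, h2⟩
      apply h
      funext i
      exact Fin.addCases (fun j => congrFun h2 j) (fun j => congrFun h1 j) i
    rw [if_neg h]
    by_cases ht : (fun i : Fin c => x (Fin.natAdd n i)) = (fun i : Fin c => y (Fin.natAdd n i))
    · have hh : ¬((fun i : Fin n => x (Fin.castAdd c i)) = (fun i : Fin n => y (Fin.castAdd c i))) :=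
        fun hh => hne ⟨ht, hh⟩
      simp [ht, hh]
    · simp [ht]

lemma extendOp_smul (n c : ℕ) (z : ℂ) (A : Matrix (Fin n → Fin 2) (Fin n → Fin 2) ℂ) :
    extendOp n c (z • A) = z • extendOp n c A := by
  funext x y
  simp only [extendOp, Matrix.smul_apply, smul_eq_mul]
  ring

lemma DetectableOn_smul {m : ℕ} {Q : Submodule ℂ ((Fin m → Fin 2) → ℂ)}
    {E : Matrix (Fin m → Fin 2) (Fin m → Fin 2) ℂ}
    (h : DetectableOn Q E) (z : ℂ) : DetectableOn Q (z • E) := by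
  constructor
  · intro v w hv hw h1 h2
    simp only [Matrix.smul_mulVec, dotProduct_smul]
    rw [h.1 v w hv hw h1 h2]
  · intro v w hv hw h0
    simp only [Matrix.smul_mulVec, dotProduct_smul]
    rw [h.2 v w hv hw h0, smul_zero]

/-- for an EA-CWS code, WS_I \ S_I consists of undetectable errors:
any α = ω_i β with ω_i a nontrivial word operator and β ∈ S_I violates the detection
conditions; hence d ≤ min{wt(α) : α ∈ WS_I \ S_I}. -/
theorem eacws_WSI_undetectable {n c M d : ℕ} (hM : 0 < M)
    (S : Set (Matrix (Fin (n + c) → Fin 2) (Fin (n + c) → Fin 2) ℂ))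
    (hSsub : ∀ A ∈ S, ∃ f : Fin (n + c) → Fin 4, A = pauliOp f ∨ A = -pauliOp f)
    (hone : (1 : Matrix (Fin (n + c) → Fin 2) (Fin (n + c) → Fin 2) ℂ) ∈ S)
    (hmul : ∀ A ∈ S, ∀ B ∈ S, A * B ∈ S)
    (habel : ∀ A ∈ S, ∀ B ∈ S, A * B = B * A)
    (hneg : (-1 : Matrix (Fin (n + c) → Fin 2) (Fin (n + c) → Fin 2) ℂ) ∉ S)
    (hcard : S.ncard = 2 ^ (n + c))
    (ψ : (Fin (n + c) → Fin 2) → ℂ)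
    (hunit : star ψ ⬝ᵥ ψ = 1)
    (hstab : ∀ A ∈ S, A.mulVec ψ = ψ)
    (ω : Fin M → Matrix (Fin n → Fin 2) (Fin n → Fin 2) ℂ)
    (hωP : ∀ k, ω k ∈ PauliGroup n)
    (hωcomm : ∀ k l, ω k * ω l = ω l * ω k)
    (hω0 : ω ⟨0, hM⟩ = 1)
    (horth : ∀ k l, star ((extendOp n c (ω k)).mulVec ψ) ⬝ᵥ ((extendOp n c (ω l)).mulVec ψ)
      = if k = l then 1 else 0)
    -- the code subspace, spanned by the basis states (ω_k ⊗ I^{⊗c})|S⟩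
    (Q : Submodule ℂ ((Fin (n + c) → Fin 2) → ℂ))
    (hQ : Q = Submodule.span ℂ (Set.range fun k : Fin M => (extendOp n c (ω k)).mulVec ψ))
    -- the isotropic subgroup S_I = {α ∈ P^n : α ⊗ I^{⊗c} ∈ S}
    (SI : Set (Matrix (Fin n → Fin 2) (Fin n → Fin 2) ℂ))
    (hSI : SI = {α | α ∈ PauliGroup n ∧ extendOp n c α ∈ S})
    -- d is (at most) the minimum distance: all errors of weight < d are detectable
    (hd : ∀ f : Fin n → Fin 4, pwt f < d → DetectableOn Q (extendOp n c (pauliOp f))) :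
    (∀ i : Fin M, i ≠ ⟨0, hM⟩ → ∀ β ∈ SI,
        ¬ DetectableOn Q (extendOp n c (ω i * β))) ∧
    (∀ (i : Fin M), ∀ β ∈ SI, ∀ (k : ℕ) (g : Fin n → Fin 4),
        ω i * β = Complex.I ^ k • pauliOp g → ω i * β ∉ SI → d ≤ pwt g) := by
  have part1 : ∀ i : Fin M, i ≠ ⟨0, hM⟩ → ∀ β ∈ SI,
      ¬ DetectableOn Q (extendOp n c (ω i * β)) := by
    intro i hi β hβ hdet
    rw [hSI] at hβ
    obtain ⟨hβP, hβS⟩ := hβ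
    set v := (extendOp n c (ω i)).mulVec ψ with hv_def
    have hv : v ∈ Q := by
      rw [hQ]; exact Submodule.subset_span ⟨i, rfl⟩
    have hψ0 : (extendOp n c (ω ⟨0, hM⟩)).mulVec ψ = ψ := by
      rw [hω0, extendOp_one, Matrix.one_mulVec]
    have hw : ψ ∈ Q := by
      rw [hQ]; exact Submodule.subset_span ⟨⟨0, hM⟩, hψ0⟩
    have horth' : star v ⬝ᵥ ψ = 0 := by
      have h := horth i ⟨0, hM⟩
      rw [hψ0] at h
      rw [hv_def, h, if_neg hi]
    have hE : (extendOp n c (ω i * β)).mulVec ψ = v := by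
      rw [extendOp_mul, ← Matrix.mulVec_mulVec, hstab _ hβS]
    have h0 := hdet.2 v ψ hv hw horth'
    rw [hE] at h0
    have h1 := horth i i
    rw [if_pos rfl] at h1
    exact one_ne_zero (h1.symm.trans h0)
  refine ⟨part1, ?_⟩
  intro i β hβ k g hαg hαnot
  by_contra hlt
  push_neg at hlt
  by_cases hi : i = ⟨0, hM⟩
  · apply hαnot
    rw [hi, hω0, one_mul]
    exact hβ
  · have hdet : DetectableOn Q (extendOp n c (ω i * β)) := by
      rw [hαg, extendOp_smul]
      exact DetectableOn_smul (hd g hlt) _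
    exact part1 i hi β hβ hdet
end
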